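/- arXiv:1001.3486 — 2 statements merged into one kernel-verified Lean document; each statement's English description precedes it below -/
import Mathlib

section
/- For every n ≥ 1 and every y^n ∈ 𝒴^n, there exists a finite family of pairwise disjoint open rectangles I_r × J_r (products of open subintervals of (0,1)) whose union equals the fundamental set u_n(y^n) up to a Lebesgue-null set, and such that the set of distinct θ-axis intervals {I_r} appearing in the family has cardinality at most n(|𝒳|−1)+1. -/
/-!
The two coordinates evolve independently: `θ` under the maps `T₀(·, y_k)` and `φ` under `T₁`.
Hence `u_n(y^n)` is exactly (the symmetric difference is empty) the disjoint union, over
itineraries `(x^n, z^n)` with `ξ(x_k, z_k) = y_k`, of rectangles `Θ(x^n) × Φ(z^n)`, where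
`Θ(x^n)` is the set of `θ` whose orbit visits the cells `x_1, …, x_n`, and similarly for `Φ`.
On each cell both maps agree with increasing affine maps, so these sets are open intervals.
Moreover `T₀(·, k)` is nondecreasing on the union of the cells, so `θ ≤ θ'` forces
`x^n ≤ x'^n` coordinatewise: the itineraries with nonempty `Θ(x^n)` form a chain in
`{1, …, a}^n`, which has at most `n(a - 1) + 1` elements.
-/

open MeasureTheory ProbabilityTheory Filter

/-- The left endpoint of the `j`-th partition interval: the cumulative mass of the indices
preceding `j`.  The `j`-th open interval of the partition is `(cum p j, cum p j + p j)`. -/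
noncomputable def cum {m : ℕ} (p : Fin m → ℝ) (j : Fin m) : ℝ :=
  ∑ j' ∈ Finset.univ.filter (fun j' => j' < j), p j'

/-- The trajectory predicate of the two-dimensional dynamical source: `θs, φs, xs, zs` witness
a well-defined `n`-step evolution from the initial state `(θ, φ)` (every iterate lies in the
interior of its partition interval) producing the source word `y`. -/
def traj {a b c : ℕ} (PX : Fin a → ℝ) (PZ : Fin c → ℝ) (ξ : Fin a × Fin c → Fin b)
    (T0 : ℝ → Fin b → ℝ) (T1 : ℝ → ℝ) (n : ℕ) (y : ℕ → Fin b) (θ φ : ℝ)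
    (θs φs : ℕ → ℝ) (xs : ℕ → Fin a) (zs : ℕ → Fin c) : Prop :=
  θs 0 = θ ∧ φs 0 = φ ∧ ∀ k < n,
    θs k ∈ Set.Ioo (cum PX (xs k)) (cum PX (xs k) + PX (xs k)) ∧
    φs k ∈ Set.Ioo (cum PZ (zs k)) (cum PZ (zs k) + PZ (zs k)) ∧
    ξ (xs k, zs k) = y k ∧
    θs (k + 1) = T0 (θs k) (y k) ∧
    φs (k + 1) = T1 (φs k)

/-- The fundamental set `u_n(y^n)` of the two-dimensional dynamical source: all initial states
`(θ, φ)` in the open unit square whose `n`-step evolution is well defined and produces the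
source word `y`. -/
def fund {a b c : ℕ} (PX : Fin a → ℝ) (PZ : Fin c → ℝ) (ξ : Fin a × Fin c → Fin b)
    (T0 : ℝ → Fin b → ℝ) (T1 : ℝ → ℝ) (n : ℕ) (y : ℕ → Fin b) : Set (ℝ × ℝ) :=
  {q | ∃ θs φs xs zs, traj PX PZ ξ T0 T1 n y q.1 q.2 θs φs xs zs}

open Set

section Itinerary

variable {α : Type*}

def orbit (F : ℕ → α → α) : ℕ → α → α
  | 0 => id
  | k + 1 => F k ∘ orbit F k

def itinerarySet {n : ℕ} (F : ℕ → α → α) (A : Fin n → Set α) : Set α :=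
  {t | ∀ k : Fin n, orbit F k t ∈ A k}

variable {F G : ℕ → α → α} {n : ℕ} {A : Fin n → Set α}

lemma orbit_eq_of_succ {s : ℕ → α} (hs : ∀ k < n, s (k + 1) = F k (s k)) :
    ∀ k ≤ n, orbit F k (s 0) = s k
  | 0, _ => rfl
  | k + 1, hk => by
    rw [hs k hk, ← orbit_eq_of_succ hs k (by omega)]
    rfl

lemma itinerarySet_subset (hn : 0 < n) : itinerarySet F A ⊆ A ⟨0, hn⟩ :=
  fun _ ht => ht ⟨0, hn⟩

lemma orbit_eq_orbit_of_mem (h : ∀ k : Fin n, EqOn (F k) (G k) (A k)) {t : α}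
    (ht : t ∈ itinerarySet F A) : ∀ k ≤ n, orbit F k t = orbit G k t
  | 0, _ => rfl
  | k + 1, hk => by
    change F k (orbit F k t) = G k (orbit G k t)
    rw [← orbit_eq_orbit_of_mem h ht k (by omega)]
    exact h ⟨k, hk⟩ (ht ⟨k, hk⟩)

lemma itinerarySet_congr (h : ∀ k : Fin n, EqOn (F k) (G k) (A k)) :
    itinerarySet F A = itinerarySet G A := by
  have hsub : ∀ {F G : ℕ → α → α}, (∀ k : Fin n, EqOn (F k) (G k) (A k)) →
      itinerarySet F A ⊆ itinerarySet G A := fun h t ht k => by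
    rw [← orbit_eq_orbit_of_mem h ht k k.2.le]
    exact ht k
  exact (hsub h).antisymm (hsub fun k => (h k).symm)

lemma orbit_le_orbit [Preorder α] {B : ℕ → Set α} (hF : ∀ k, MonotoneOn (F k) (B k)) {t t' : α}
    (ht : ∀ k < n, orbit F k t ∈ B k) (ht' : ∀ k < n, orbit F k t' ∈ B k) (h : t ≤ t') :
    ∀ k ≤ n, orbit F k t ≤ orbit F k t'
  | 0, _ => h
  | k + 1, hk => hF k (ht k hk) (ht' k hk) (orbit_le_orbit hF ht ht' h k (by omega))

lemma continuous_orbit [TopologicalSpace α] (hF : ∀ k, Continuous (F k)) :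
    ∀ k, Continuous (orbit F k)
  | 0 => continuous_id
  | k + 1 => (hF k).comp (continuous_orbit hF k)

lemma monotone_orbit [Preorder α] (hF : ∀ k, Monotone (F k)) : ∀ k, Monotone (orbit F k)
  | 0 => monotone_id
  | k + 1 => (hF k).comp (monotone_orbit hF k)

end Itinerary

section Intervals

variable {α : Type*} [ConditionallyCompleteLinearOrder α] [TopologicalSpace α] [OrderTopology α]
  [DenselyOrdered α] [NoMinOrder α] [NoMaxOrder α] [Nonempty α]

lemma exists_Ioo_eq_of_isOpen {S : Set α} (ho : IsOpen S) (hc : S.OrdConnected) (hb : BddBelow S)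
    (ha : BddAbove S) : ∃ u v, S = Ioo u v := by
  rcases S.eq_empty_or_nonempty with rfl | hne
  · obtain ⟨u⟩ := ‹Nonempty α›
    exact ⟨u, u, (Ioo_self u).symm⟩
  refine ⟨sInf S, sSup S, subset_antisymm (fun t ht => ?_)
    (IsConnected.Ioo_csInf_csSup_subset ⟨hne, hc.isPreconnected⟩ hb ha)⟩
  have hS : ∀ᶠ s in nhds t, s ∈ S := ho.mem_nhds ht
  obtain ⟨l, hlt, hl⟩ := hS.exists_lt
  obtain ⟨u, hgt, hu⟩ := hS.exists_gt
  exact ⟨(csInf_le hb hl).trans_lt hlt, hgt.trans_le (le_csSup ha hu)⟩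

lemma exists_Ioo_eq_itinerarySet {n : ℕ} (hn : 0 < n) {F : ℕ → α → α} {A : Fin n → Set α}
    (hA : ∀ k, ∃ u v, A k = Ioo u v)
    (hF : ∀ k : Fin n, ∃ g : α → α, Continuous g ∧ Monotone g ∧ EqOn (F k) g (A k)) :
    ∃ u v, itinerarySet F A = Ioo u v := by
  choose g hgc hgm hFg using hF
  choose l r hlr using hA
  let G : ℕ → α → α := fun k => if h : k < n then g ⟨k, h⟩ else id
  have hGc : ∀ k, Continuous (G k) := fun k => by
    by_cases h : k < n <;> simp only [G, h, dite_true, dite_false, hgc, continuous_id]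
  have hGm : ∀ k, Monotone (G k) := fun k => by
    by_cases h : k < n <;> simp only [G, h, dite_true, dite_false, hgm, monotone_id]
  have hFG : ∀ k : Fin n, EqOn (F k) (G k) (A k) := fun k => by
    simpa only [G, k.2, dite_true] using hFg k
  have hS : itinerarySet G A = ⋂ k : Fin n, orbit G k ⁻¹' Ioo (l k) (r k) := by
    ext t
    simp only [itinerarySet, hlr, mem_ofPred_eq, mem_iInter, mem_preimage]
  have hsub : itinerarySet G A ⊆ Ioo (l ⟨0, hn⟩) (r ⟨0, hn⟩) :=
    hlr ⟨0, hn⟩ ▸ itinerarySet_subset hn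
  rw [itinerarySet_congr hFG]
  refine exists_Ioo_eq_of_isOpen ?_ ?_ (bddBelow_Ioo.mono hsub) (bddAbove_Ioo.mono hsub)
  · rw [hS]
    exact isOpen_iInter_of_finite fun k => isOpen_Ioo.preimage (continuous_orbit hGc k)
  · rw [hS]
    exact ordConnected_iInter fun k => ordConnected_Ioo.preimage_mono (monotone_orbit hGm k)

end Intervals

lemma IsChain.injOn_of_strictMono {α β : Type*} [PartialOrder α] [Preorder β] {f : α → β}
    (hf : StrictMono f) {S : Set α} (hS : IsChain (· ≤ ·) S) : InjOn f S := by
  intro v hv w hw hvw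
  by_contra hne
  rcases hS.total hv hw with h | h
  · exact (hf (h.lt_of_ne hne)).ne hvw
  · exact (hf (h.lt_of_ne (Ne.symm hne))).ne hvw.symm

lemma strictMono_sum_val {n m : ℕ} : StrictMono fun v : Fin n → Fin m => ∑ k, (v k : ℕ) := by
  intro v w h
  obtain ⟨hle, k, hk⟩ := Pi.lt_def.1 h
  exact Finset.sum_lt_sum (fun j _ => hle j) ⟨k, Finset.mem_univ k, hk⟩

/-- The coordinate sum is strictly monotone, so it is injective on a chain and takes at most
`n * (m - 1) + 1` values. -/
lemma ncard_le_of_isChain {n m : ℕ} {S : Set (Fin n → Fin m)} (hS : IsChain (· ≤ ·) S) :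
    S.ncard ≤ n * (m - 1) + 1 := by
  have hrange : (fun v : Fin n → Fin m => ∑ k, (v k : ℕ)) '' S ⊆ Finset.Iic (n * (m - 1)) := by
    rintro _ ⟨v, -, rfl⟩
    rw [Finset.coe_Iic, mem_Iic]
    calc ∑ k, (v k : ℕ) ≤ ∑ _k : Fin n, (m - 1) :=
          Finset.sum_le_sum fun k _ => Nat.le_sub_one_of_lt (v k).2
      _ = n * (m - 1) := by simp
  calc S.ncard = ((fun v : Fin n → Fin m => ∑ k, (v k : ℕ)) '' S).ncard :=
        (hS.injOn_of_strictMono strictMono_sum_val).ncard_image.symm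
    _ ≤ (Finset.Iic (n * (m - 1)) : Set ℕ).ncard := ncard_le_ncard hrange (Finset.finite_toSet _)
    _ = n * (m - 1) + 1 := by rw [ncard_coe_finset, Nat.card_Iic]

section Cells

variable {m : ℕ} {p q : Fin m → ℝ} {i i' : Fin m} {t t' : ℝ}

def cell (p : Fin m → ℝ) (i : Fin m) : Set ℝ :=
  Ioo (cum p i) (cum p i + p i)

lemma cum_eq_sum_Iio (p : Fin m → ℝ) (i : Fin m) : cum p i = ∑ j ∈ Finset.Iio i, p j := by
  rw [cum, Finset.filter_gt_eq_Iio]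

lemma cum_add_eq_sum_Iic (p : Fin m → ℝ) (i : Fin m) :
    cum p i + p i = ∑ j ∈ Finset.Iic i, p j := by
  rw [cum_eq_sum_Iio, ← Finset.Iio_insert, Finset.sum_insert Finset.notMem_Iio_self, add_comm]

lemma cum_nonneg (hp : ∀ j, 0 ≤ p j) (i : Fin m) : 0 ≤ cum p i :=
  Finset.sum_nonneg fun j _ => hp j

lemma cum_add_le_cum (hp : ∀ j, 0 ≤ p j) (h : i < i') : cum p i + p i ≤ cum p i' := by
  rw [cum_add_eq_sum_Iic, cum_eq_sum_Iio]
  refine Finset.sum_le_sum_of_subset_of_nonneg (fun j hj => ?_) fun j _ _ => hp j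
  exact Finset.mem_Iio.2 ((Finset.mem_Iic.1 hj).trans_lt h)

lemma cum_add_le_sum (hp : ∀ j, 0 ≤ p j) (i : Fin m) : cum p i + p i ≤ ∑ j, p j := by
  rw [cum_add_eq_sum_Iic]
  exact Finset.sum_le_sum_of_subset_of_nonneg (Finset.subset_univ _) fun j _ _ => hp j

lemma cell_subset_Ioo (hp : ∀ j, 0 ≤ p j) (hsum : ∑ j, p j = 1) (i : Fin m) :
    cell p i ⊆ Ioo 0 1 := fun _ ht =>
  ⟨(cum_nonneg hp i).trans_lt ht.1, ht.2.trans_le (hsum ▸ cum_add_le_sum hp i)⟩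

lemma pos_of_mem_cell (ht : t ∈ cell p i) : 0 < p i := by
  have := ht.1.trans ht.2
  linarith

lemma le_of_mem_cell (hp : ∀ j, 0 ≤ p j) (ht : t ∈ cell p i) (ht' : t' ∈ cell p i')
    (h : t ≤ t') : i ≤ i' := by
  by_contra! hlt
  linarith [cum_add_le_cum hp hlt, ht.1, ht'.2]

lemma eq_of_mem_cell (hp : ∀ j, 0 ≤ p j) (ht : t ∈ cell p i) (ht' : t ∈ cell p i') : i = i' :=
  (le_of_mem_cell hp ht ht' le_rfl).antisymm (le_of_mem_cell hp ht' ht le_rfl)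

/-- The increasing affine map from `cell p i` onto `cell q i`. -/
noncomputable def cellMap (p q : Fin m → ℝ) (i : Fin m) (t : ℝ) : ℝ :=
  cum q i + (t - cum p i) * (q i / p i)

lemma continuous_cellMap (p q : Fin m → ℝ) (i : Fin m) : Continuous (cellMap p q i) := by
  unfold cellMap
  fun_prop

lemma monotone_cellMap (hp : 0 ≤ p i) (hq : 0 ≤ q i) : Monotone (cellMap p q i) :=
  fun t t' h => by
    unfold cellMap
    gcongr

lemma cum_le_cellMap (hp : 0 ≤ p i) (hq : 0 ≤ q i) (ht : t ∈ cell p i) :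
    cum q i ≤ cellMap p q i t :=
  le_add_of_nonneg_right (mul_nonneg (sub_nonneg.2 ht.1.le) (div_nonneg hq hp))

lemma cellMap_le_cum_add (hq : 0 ≤ q i) (ht : t ∈ cell p i) :
    cellMap p q i t ≤ cum q i + q i := by
  have hpos := pos_of_mem_cell ht
  calc cellMap p q i t ≤ cum q i + p i * (q i / p i) := by
        unfold cellMap
        gcongr
        linarith [ht.2]
    _ = cum q i + q i := by field_simp

lemma monotoneOn_iUnion_cell (hp : ∀ j, 0 ≤ p j) (hq : ∀ j, 0 ≤ q j) {f : ℝ → ℝ}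
    (hf : ∀ i, EqOn f (cellMap p q i) (cell p i)) : MonotoneOn f (⋃ i, cell p i) := by
  intro t ht t' ht' h
  obtain ⟨i, ht⟩ := mem_iUnion.1 ht
  obtain ⟨i', ht'⟩ := mem_iUnion.1 ht'
  rw [hf i ht, hf i' ht']
  rcases (le_of_mem_cell hp ht ht' h).lt_or_eq with hlt | rfl
  · calc cellMap p q i t ≤ cum q i + q i := cellMap_le_cum_add (hq i) ht
      _ ≤ cum q i' := cum_add_le_cum hq hlt
      _ ≤ cellMap p q i' t' := cum_le_cellMap (hp i') (hq i') ht'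
  · exact monotone_cellMap (hp i) (hq i) h

end Cells

section CellItineraries

variable {m n : ℕ} {p : Fin m → ℝ} {F : ℕ → ℝ → ℝ} {x x' : Fin n → Fin m} {t t' : ℝ}

lemma eq_of_mem_itinerarySet_cell (hp : ∀ j, 0 ≤ p j) (ht : t ∈ itinerarySet F (cell p ∘ x))
    (ht' : t ∈ itinerarySet F (cell p ∘ x')) : x = x' :=
  funext fun k => eq_of_mem_cell hp (ht k) (ht' k)

lemma le_of_mem_itinerarySet_cell (hp : ∀ j, 0 ≤ p j)
    (hF : ∀ k, MonotoneOn (F k) (⋃ i, cell p i))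
    (ht : t ∈ itinerarySet F (cell p ∘ x)) (ht' : t' ∈ itinerarySet F (cell p ∘ x'))
    (h : t ≤ t') : x ≤ x' := by
  have hcells : ∀ {x : Fin n → Fin m} {t}, t ∈ itinerarySet F (cell p ∘ x) →
      ∀ k < n, orbit F k t ∈ ⋃ i, cell p i :=
    fun ht k hk => mem_iUnion.2 ⟨_, ht ⟨k, hk⟩⟩
  intro k
  exact le_of_mem_cell hp (ht k) (ht' k)
    (orbit_le_orbit hF (hcells ht) (hcells ht') h k k.2.le)

lemma isChain_itineraries (hp : ∀ j, 0 ≤ p j) (hF : ∀ k, MonotoneOn (F k) (⋃ i, cell p i)) :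
    IsChain (· ≤ ·) {x : Fin n → Fin m | (itinerarySet F (cell p ∘ x)).Nonempty} := by
  rintro x ⟨t, ht⟩ x' ⟨t', ht'⟩ -
  rcases le_total t t' with h | h
  · exact Or.inl (le_of_mem_itinerarySet_cell hp hF ht ht' h)
  · exact Or.inr (le_of_mem_itinerarySet_cell hp hF ht' ht h)

lemma exists_Ioo_eq_itinerarySet_cellMap (hn : 0 < n) (hp : ∀ j, 0 ≤ p j)
    {q : ℕ → Fin m → ℝ} (hq : ∀ k j, 0 ≤ q k j)
    (hF : ∀ k i, EqOn (F k) (cellMap p (q k) i) (cell p i))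
    (x : Fin n → Fin m) : ∃ u v, itinerarySet F (cell p ∘ x) = Ioo u v :=
  exists_Ioo_eq_itinerarySet hn (fun _ => ⟨_, _, rfl⟩) fun k =>
    ⟨_, continuous_cellMap _ _ _, monotone_cellMap (hp _) (hq _ _), hF k (x k)⟩

lemma exists_Ioo_eq_itinerarySet_of_eqOn_div (hn : 0 < n) (hp : ∀ j, 0 ≤ p j)
    (hF : ∀ k i, EqOn (F k) (fun t => (t - cum p i) / p i) (cell p i)) (x : Fin n → Fin m) :
    ∃ u v, itinerarySet F (cell p ∘ x) = Ioo u v :=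
  exists_Ioo_eq_itinerarySet hn (fun _ => ⟨_, _, rfl⟩) fun k =>
    ⟨_, by fun_prop, fun t t' h => div_le_div_of_nonneg_right (by linarith) (hp _), hF k (x k)⟩

lemma ncard_image_itinerarySet_le (hp : ∀ j, 0 ≤ p j)
    (hF : ∀ k, MonotoneOn (F k) (⋃ i, cell p i)) :
    ((fun x : Fin n → Fin m => itinerarySet F (cell p ∘ x)) ''
      {x | (itinerarySet F (cell p ∘ x)).Nonempty}).ncard ≤ n * (m - 1) + 1 :=
  (ncard_image_le (toFinite _)).trans (ncard_le_of_isChain (isChain_itineraries hp hF))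

end CellItineraries

lemma mem_fund_iff {a b c n : ℕ} {PX : Fin a → ℝ} {PZ : Fin c → ℝ} {ξ : Fin a × Fin c → Fin b}
    {T0 : ℝ → Fin b → ℝ} {T1 : ℝ → ℝ} {y : ℕ → Fin b} (hn : 0 < n) {q : ℝ × ℝ} :
    q ∈ fund PX PZ ξ T0 T1 n y ↔ ∃ (x : Fin n → Fin a) (z : Fin n → Fin c),
      (∀ k, ξ (x k, z k) = y k) ∧ q.1 ∈ itinerarySet (fun k t => T0 t (y k)) (cell PX ∘ x) ∧
        q.2 ∈ itinerarySet (fun _ => T1) (cell PZ ∘ z) := by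
  obtain ⟨θ, φ⟩ := q
  constructor
  · rintro ⟨θs, φs, xs, zs, rfl, rfl, h⟩
    have hθ := orbit_eq_of_succ (F := fun k t => T0 t (y k)) fun k hk => (h k hk).2.2.2.1
    have hφ := orbit_eq_of_succ (F := fun _ => T1) fun k hk => (h k hk).2.2.2.2
    refine ⟨fun k => xs k, fun k => zs k, fun k => (h k k.2).2.2.1, fun k => ?_, fun k => ?_⟩
    · rw [hθ k k.2.le]
      exact (h k k.2).1
    · rw [hφ k k.2.le]
      exact (h k k.2).2.1
  · rintro ⟨x, z, hξ, hθ, hφ⟩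
    refine ⟨fun k => orbit (fun k t => T0 t (y k)) k θ, fun k => orbit (fun _ => T1) k φ,
      fun k => if h : k < n then x ⟨k, h⟩ else x ⟨0, hn⟩,
      fun k => if h : k < n then z ⟨k, h⟩ else z ⟨0, hn⟩, rfl, rfl, fun k hk => ?_⟩
    simp only [dif_pos hk]
    exact ⟨hθ ⟨k, hk⟩, hφ ⟨k, hk⟩, hξ ⟨k, hk⟩, rfl, rfl⟩

lemma eqOn_cellMap_of_piecewise_affine {a b : ℕ} {PXY : Fin a × Fin b → ℝ} {PX : Fin a → ℝ}
    {PY : Fin b → ℝ} {T0 : ℝ → Fin b → ℝ}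
    (hT0 : ∀ (k : Fin b) (i : Fin a), 0 < PX i →
      ∀ θ ∈ Set.Icc (cum PX i) (cum PX i + PX i),
        T0 θ k = (∑ i' ∈ Finset.univ.filter (fun i' => i' < i), PXY (i', k)) / PY k
          + (θ - cum PX i) * (PXY (i, k) / (PY k * PX i)))
    (k : Fin b) (i : Fin a) :
    EqOn (T0 · k) (cellMap PX (fun i => PXY (i, k) / PY k) i) (cell PX i) := fun θ hθ => by
  change T0 θ k = _
  rw [hT0 k i (pos_of_mem_cell hθ) θ (Ioo_subset_Icc_self hθ)]
  simp only [cellMap, cum, Finset.sum_div, div_div]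

theorem stmt_6_general
    {a b c : ℕ}
    (PXY : Fin a × Fin b → ℝ)
    (hPXY0 : ∀ q, 0 ≤ PXY q) (hPXY1 : ∑ q : Fin a × Fin b, PXY q = 1)
    (PX : Fin a → ℝ) (hPX : ∀ i, PX i = ∑ k, PXY (i, k))
    (PY : Fin b → ℝ) (hPY : ∀ k, PY k = ∑ i, PXY (i, k))
    (PZ : Fin c → ℝ) (hPZ0 : ∀ j, 0 ≤ PZ j) (hPZ1 : ∑ j, PZ j = 1)
    (ξ : Fin a × Fin c → Fin b)
    (T0 : ℝ → Fin b → ℝ)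
    (hT0 : ∀ (k : Fin b) (i : Fin a), 0 < PX i →
      ∀ θ ∈ Set.Icc (cum PX i) (cum PX i + PX i),
        T0 θ k = (∑ i' ∈ Finset.univ.filter (fun i' => i' < i), PXY (i', k)) / PY k
          + (θ - cum PX i) * (PXY (i, k) / (PY k * PX i)))
    (T1 : ℝ → ℝ)
    (hT1 : ∀ j : Fin c, ∀ φ ∈ Set.Ioo (cum PZ j) (cum PZ j + PZ j),
      T1 φ = (φ - cum PZ j) / PZ j)
    :
    ∀ (n : ℕ), 1 ≤ n → ∀ (y : ℕ → Fin b),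
      ∃ (N : ℕ) (I J : Fin N → Set ℝ),
        (∀ r, ∃ u v : ℝ, I r = Set.Ioo u v) ∧
        (∀ r, ∃ u v : ℝ, J r = Set.Ioo u v) ∧
        (∀ r, I r ⊆ Set.Ioo 0 1) ∧ (∀ r, J r ⊆ Set.Ioo 0 1) ∧
        (∀ r s, r ≠ s → Disjoint (I r ×ˢ J r) (I s ×ˢ J s)) ∧
        MeasureTheory.volume (symmDiff (⋃ r, I r ×ˢ J r) (fund PX PZ ξ T0 T1 n y)) = 0 ∧
        (Set.range I).ncard ≤ n * (a - 1) + 1 := by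
  intro n hn y
  have hPX0 : ∀ i, 0 ≤ PX i := fun i => hPX i ▸ Finset.sum_nonneg fun k _ => hPXY0 (i, k)
  have hPX1 : ∑ i, PX i = 1 := by simp_rw [hPX]; rwa [← Fintype.sum_prod_type]
  have hq : ∀ k i, 0 ≤ PXY (i, y k) / PY (y k) := fun k i =>
    div_nonneg (hPXY0 _) (hPY (y k) ▸ Finset.sum_nonneg fun i _ => hPXY0 (i, y k))
  have hFθ := fun k => eqOn_cellMap_of_piecewise_affine hT0 (y k)
  set Θ : (Fin n → Fin a) → Set ℝ := fun x => itinerarySet (fun k t => T0 t (y k)) (cell PX ∘ x)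
  set Φ : (Fin n → Fin c) → Set ℝ := fun z => itinerarySet (fun _ => T1) (cell PZ ∘ z)
  -- Empty rectangles are dropped: each would add the empty set to the distinct `θ`-intervals.
  let ι := {w : (Fin n → Fin a) × (Fin n → Fin c) //
    (∀ k, ξ (w.1 k, w.2 k) = y k) ∧ (Θ w.1 ×ˢ Φ w.2).Nonempty}
  obtain ⟨N, ⟨e⟩⟩ := Finite.exists_equiv_fin ι
  have hfund : ⋃ r, Θ (e.symm r).1.1 ×ˢ Φ (e.symm r).1.2 = fund PX PZ ξ T0 T1 n y := by
    ext q
    rw [e.symm.surjective.iUnion_comp (fun w : ι => Θ w.1.1 ×ˢ Φ w.1.2), mem_iUnion,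
      mem_fund_iff hn]
    exact ⟨fun ⟨w, hw⟩ => ⟨_, _, w.2.1, hw⟩, fun ⟨x, z, hξ, hw⟩ => ⟨⟨(x, z), hξ, q, hw⟩, hw⟩⟩
  refine ⟨N, fun r => Θ (e.symm r).1.1, fun r => Φ (e.symm r).1.2,
    fun r => exists_Ioo_eq_itinerarySet_cellMap hn hPX0 hq hFθ _,
    fun r => exists_Ioo_eq_itinerarySet_of_eqOn_div hn hPZ0 (fun _ => hT1) _,
    fun r => (itinerarySet_subset hn).trans (cell_subset_Ioo hPX0 hPX1 _),
    fun r => (itinerarySet_subset hn).trans (cell_subset_Ioo hPZ0 hPZ1 _), fun r s hrs => ?_,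
    by rw [hfund, symmDiff_self, bot_eq_empty, measure_empty], ?_⟩
  · refine disjoint_left.2 fun q hr hs => hrs (e.symm.injective (Subtype.ext (Prod.ext ?_ ?_)))
    · exact eq_of_mem_itinerarySet_cell hPX0 hr.1 hs.1
    · exact eq_of_mem_itinerarySet_cell hPZ0 hr.2 hs.2
  · have hrange : range (fun r => Θ (e.symm r).1.1) ⊆ Θ '' {x | (Θ x).Nonempty} := by
      rintro _ ⟨r, rfl⟩
      exact ⟨_, (prod_nonempty_iff.1 (e.symm r).2.2).1, rfl⟩
    exact (ncard_le_ncard hrange (toFinite _)).trans <|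
      ncard_image_itinerarySet_le hPX0 fun k => monotoneOn_iUnion_cell hPX0 (hq k) (hFθ k)

/-- Lemma 2 of the paper: for every `n ≥ 1` and every source word `y^n`, the fundamental set
`u_n(y^n)` is (up to a Lebesgue-null set) a finite disjoint union of open rectangles
`I r ×ˢ J r` contained in the unit square, whose distinct `θ`-axis projection intervals `I r`
number at most `n(|𝒳| - 1) + 1`. -/
theorem stmt_6
    {a b c : ℕ}
    (PXY : Fin a × Fin b → ℝ)
    (hPXY0 : ∀ q, 0 ≤ PXY q) (hPXY1 : ∑ q : Fin a × Fin b, PXY q = 1)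
    (PX : Fin a → ℝ) (hPX : ∀ i, PX i = ∑ k, PXY (i, k))
    (PY : Fin b → ℝ) (hPY : ∀ k, PY k = ∑ i, PXY (i, k))
    (PZ : Fin c → ℝ) (hPZ0 : ∀ j, 0 ≤ PZ j) (hPZ1 : ∑ j, PZ j = 1)
    (ξ : Fin a × Fin c → Fin b)
    (hξ : ∀ i k, ∑ j ∈ Finset.univ.filter (fun j => ξ (i, j) = k), PX i * PZ j = PXY (i, k))
    (T0 : ℝ → Fin b → ℝ)
    (hT0 : ∀ (k : Fin b) (i : Fin a), 0 < PX i →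
      ∀ θ ∈ Set.Icc (cum PX i) (cum PX i + PX i),
        T0 θ k = (∑ i' ∈ Finset.univ.filter (fun i' => i' < i), PXY (i', k)) / PY k
          + (θ - cum PX i) * (PXY (i, k) / (PY k * PX i)))
    (T1 : ℝ → ℝ)
    (hT1 : ∀ j : Fin c, ∀ φ ∈ Set.Ioo (cum PZ j) (cum PZ j + PZ j),
      T1 φ = (φ - cum PZ j) / PZ j)
    :
    ∀ (n : ℕ), 1 ≤ n → ∀ (y : ℕ → Fin b),
      ∃ (N : ℕ) (I J : Fin N → Set ℝ),
        (∀ r, ∃ u v : ℝ, I r = Set.Ioo u v) ∧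
        (∀ r, ∃ u v : ℝ, J r = Set.Ioo u v) ∧
        (∀ r, I r ⊆ Set.Ioo 0 1) ∧ (∀ r, J r ⊆ Set.Ioo 0 1) ∧
        (∀ r s, r ≠ s → Disjoint (I r ×ˢ J r) (I s ×ˢ J s)) ∧
        MeasureTheory.volume (symmDiff (⋃ r, I r ×ˢ J r) (fund PX PZ ξ T0 T1 n y)) = 0 ∧
        (Set.range I).ncard ≤ n * (a - 1) + 1 :=
  stmt_6_general PXY hPXY0 hPXY1 PX hPX PY hPY PZ hPZ0 hPZ1 ξ T0 hT0 T1 hT1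
end

section
/- Let 𝒳, 𝒴 be finite alphabets, P_Y a strictly positive probability mass function on 𝒴, d: 𝒳×𝒴 → [0, d_max] a bounded distortion measure, and P_XY a joint probability mass function on 𝒳×𝒴 with 𝒴-marginal P_Y. Then for every α ∈ (0,1) there exists a joint probability mass function Q_XY on 𝒳×𝒴 with 𝒴-marginal P_Y such that: Q_XY(x,y) > 0 for all (x,y); the mutual information of Q_XY satisfies I_Q(X;Y) ≤ I_P(X;Y) + α·log₂|𝒳|; and the expected distortion satisfies Σ_{x,y} Q_XY(x,y) d(x,y) ≤ Σ_{x,y} P_XY(x,y) d(x,y) + α·d_max. -/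
/-!
The witness is `Q = (1 - α) P + α · (Uniform(𝒳) ⊗ P_Y)`, i.e. the channel
`Q_{X|Y} = (1 - α) P_{X|Y} + α · Uniform(𝒳)` fed with `P_Y`. It is strictly positive and keeps
the `𝒴`-marginal. Since `Q_X Q_Y = (1 - α) P_X P_Y + α · Uniform(𝒳) ⊗ P_Y`, the log-sum inequality
applied termwise, whose second pair `a₂ = b₂ = α · Uniform(𝒳) ⊗ P_Y` contributes nothing, gives
`I(Q) ≤ (1 - α) I(P) ≤ I(P)` by Gibbs' inequality `I(P) ≥ 0`. The distortion is linear in `Q`,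
so it grows by at most `α · dmax`.
-/

open Real

theorem Real.sub_le_mul_log_div {a b : ℝ} (ha : 0 ≤ a) (hb : 0 ≤ b) (hab : b = 0 → a = 0) :
    a - b ≤ a * log (a / b) := by
  rcases hb.eq_or_lt with rfl | hb
  · simp [hab rfl]
  · have h := mul_nonneg hb.le (InformationTheory.klFun_nonneg (div_nonneg ha hb.le))
    rw [InformationTheory.klFun_apply] at h
    field_simp at h
    linarith

/-- Convexity of `t ↦ t log t` at the points `aᵢ / bᵢ` with weights `bᵢ / (b₁ + b₂)`. -/
theorem Real.add_mul_log_div_add_le {a₁ a₂ b₁ b₂ : ℝ} (ha₁ : 0 ≤ a₁) (ha₂ : 0 ≤ a₂)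
    (hb₁ : 0 < b₁) (hb₂ : 0 < b₂) :
    (a₁ + a₂) * log ((a₁ + a₂) / (b₁ + b₂)) ≤ a₁ * log (a₁ / b₁) + a₂ * log (a₂ / b₂) := by
  have hb : 0 < b₁ + b₂ := add_pos hb₁ hb₂
  have h := convexOn_mul_log.2 (Set.mem_Ici.2 (div_nonneg ha₁ hb₁.le))
    (Set.mem_Ici.2 (div_nonneg ha₂ hb₂.le)) (div_nonneg hb₁.le hb.le)
    (div_nonneg hb₂.le hb.le) (by field_simp)
  have hmean : b₁ / (b₁ + b₂) * (a₁ / b₁) + b₂ / (b₁ + b₂) * (a₂ / b₂)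
      = (a₁ + a₂) / (b₁ + b₂) := by
    field_simp
  simp only [smul_eq_mul, hmean] at h
  calc (a₁ + a₂) * log ((a₁ + a₂) / (b₁ + b₂))
      = (b₁ + b₂) * ((a₁ + a₂) / (b₁ + b₂) * log ((a₁ + a₂) / (b₁ + b₂))) := by field_simp
    _ ≤ (b₁ + b₂) * (b₁ / (b₁ + b₂) * (a₁ / b₁ * log (a₁ / b₁))
          + b₂ / (b₁ + b₂) * (a₂ / b₂ * log (a₂ / b₂))) := by gcongr
    _ = a₁ * log (a₁ / b₁) + a₂ * log (a₂ / b₂) := by field_simp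

theorem Real.mul_logb_div_mix_le {t a b c : ℝ} (ht : 0 < t) (ha : 0 ≤ a) (hb : 0 ≤ b)
    (hab : b = 0 → a = 0) (hc : 0 < c) :
    (t * a + c) * logb 2 ((t * a + c) / (t * b + c)) ≤ t * (a * logb 2 (a / b)) := by
  rcases hb.eq_or_lt with rfl | hb
  · simp [hab rfl, hc.ne']
  · have h := add_mul_log_div_add_le (mul_nonneg ht.le ha) hc.le (mul_pos ht hb) hc
    rw [mul_div_mul_left _ _ ht.ne', div_self hc.ne', log_one, mul_zero, add_zero] at h
    simp only [logb, ← mul_div_assoc]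
    rw [← mul_assoc]
    exact div_le_div_of_nonneg_right h (log_nonneg one_le_two)

section MutualInformation

variable {𝒳 𝒴 : Type*} [Fintype 𝒳] [Fintype 𝒴]

/-- Terms with `R (x, y) = 0` vanish, matching the convention `0 · log (0 / q) = 0`. -/
noncomputable def mutualInfo (R : 𝒳 × 𝒴 → ℝ) : ℝ :=
  ∑ x, ∑ y, R (x, y) * logb 2 (R (x, y) / ((∑ y', R (x, y')) * (∑ x', R (x', y))))

theorem eq_zero_of_marginals_mul_eq_zero {R : 𝒳 × 𝒴 → ℝ} (hR0 : ∀ p, 0 ≤ R p)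
    {x : 𝒳} {y : 𝒴} (h : (∑ y', R (x, y')) * (∑ x', R (x', y)) = 0) : R (x, y) = 0 := by
  rcases mul_eq_zero.1 h with h | h
  · exact le_antisymm (h ▸ Finset.single_le_sum (f := fun y' => R (x, y'))
      (fun _ _ => hR0 _) (Finset.mem_univ y)) (hR0 _)
  · exact le_antisymm (h ▸ Finset.single_le_sum (f := fun x' => R (x', y))
      (fun _ _ => hR0 _) (Finset.mem_univ x)) (hR0 _)

theorem mutualInfo_nonneg {R : 𝒳 × 𝒴 → ℝ} (hR0 : ∀ p, 0 ≤ R p) (hR1 : ∑ p, R p = 1) :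
    0 ≤ mutualInfo R := by
  have hgibbs : ∀ x y, R (x, y) - (∑ y', R (x, y')) * (∑ x', R (x', y))
      ≤ R (x, y) * log (R (x, y) / ((∑ y', R (x, y')) * (∑ x', R (x', y)))) := fun x y =>
    sub_le_mul_log_div (hR0 _)
      (mul_nonneg (Finset.sum_nonneg fun _ _ => hR0 _) (Finset.sum_nonneg fun _ _ => hR0 _))
      (eq_zero_of_marginals_mul_eq_zero hR0)
  have hsum_fst : ∑ x, ∑ y, R (x, y) = 1 := by rw [← Fintype.sum_prod_type, hR1]
  have hsum_snd : ∑ y, ∑ x, R (x, y) = 1 := by rw [Finset.sum_comm, hsum_fst]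
  have hnats : 0 ≤ ∑ x, ∑ y,
      R (x, y) * log (R (x, y) / ((∑ y', R (x, y')) * (∑ x', R (x', y)))) :=
    calc (0 : ℝ) = ∑ x, ∑ y, R (x, y) - (∑ x, ∑ y', R (x, y')) * (∑ y, ∑ x', R (x', y)) := by
          rw [hsum_fst, hsum_snd]; ring
      _ = ∑ x, ∑ y, (R (x, y) - (∑ y', R (x, y')) * (∑ x', R (x', y))) := by
          simp only [Finset.sum_sub_distrib, Finset.sum_mul_sum]
      _ ≤ _ := Finset.sum_le_sum fun x _ => Finset.sum_le_sum fun y _ => hgibbs x y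
  simpa only [mutualInfo, logb, ← mul_div_assoc, ← Finset.sum_div]
    using div_nonneg hnats (log_nonneg one_le_two)

end MutualInformation

section MixUniform

variable {𝒳 𝒴 : Type*} [Fintype 𝒳]

noncomputable def mixUniform (α : ℝ) (P : 𝒳 × 𝒴 → ℝ) (PY : 𝒴 → ℝ) : 𝒳 × 𝒴 → ℝ :=
  fun p => (1 - α) * P p + α * (PY p.2 / Fintype.card 𝒳)

variable {α : ℝ} {P : 𝒳 × 𝒴 → ℝ} {PY : 𝒴 → ℝ}

theorem mixUniform_pos [Nonempty 𝒳] (hα : α ∈ Set.Ioo (0 : ℝ) 1) (hP0 : ∀ p, 0 ≤ P p)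
    (hPY : ∀ y, 0 < PY y) (p : 𝒳 × 𝒴) : 0 < mixUniform α P PY p := by
  have hN : (0 : ℝ) < Fintype.card 𝒳 := Nat.cast_pos.2 Fintype.card_pos
  exact add_pos_of_nonneg_of_pos (mul_nonneg (sub_pos.2 hα.2).le (hP0 p))
    (mul_pos hα.1 (div_pos (hPY p.2) hN))

theorem marginal_snd_mixUniform [Nonempty 𝒳] (hPmarg : ∀ y, ∑ x, P (x, y) = PY y) (y : 𝒴) :
    ∑ x, mixUniform α P PY (x, y) = PY y := by
  have hN : (Fintype.card 𝒳 : ℝ) ≠ 0 := Nat.cast_ne_zero.2 Fintype.card_ne_zero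
  simp only [mixUniform, Finset.sum_add_distrib, ← Finset.mul_sum, hPmarg, Finset.sum_const,
    Finset.card_univ, nsmul_eq_mul]
  field_simp
  ring

variable [Fintype 𝒴]

theorem marginal_fst_mixUniform (hPY1 : ∑ y, PY y = 1) (x : 𝒳) :
    ∑ y, mixUniform α P PY (x, y) = (1 - α) * ∑ y, P (x, y) + α / Fintype.card 𝒳 := by
  simp only [mixUniform, Finset.sum_add_distrib, ← Finset.mul_sum, ← Finset.sum_div, hPY1,
    mul_one_div]

theorem mutualInfo_mixUniform_le [Nonempty 𝒳] (hα : α ∈ Set.Ioo (0 : ℝ) 1)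
    (hP0 : ∀ p, 0 ≤ P p) (hPY : ∀ y, 0 < PY y) (hPY1 : ∑ y, PY y = 1)
    (hPmarg : ∀ y, ∑ x, P (x, y) = PY y) :
    mutualInfo (mixUniform α P PY) ≤ (1 - α) * mutualInfo P := by
  have hN : (0 : ℝ) < Fintype.card 𝒳 := Nat.cast_pos.2 Fintype.card_pos
  calc mutualInfo (mixUniform α P PY)
      ≤ ∑ x, ∑ y, (1 - α) * (P (x, y) *
          logb 2 (P (x, y) / ((∑ y', P (x, y')) * (∑ x', P (x', y))))) := by
        simp only [mutualInfo, marginal_snd_mixUniform hPmarg, marginal_fst_mixUniform hPY1]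
        refine Finset.sum_le_sum fun x _ => Finset.sum_le_sum fun y _ => ?_
        have hden : ((1 - α) * ∑ y', P (x, y') + α / Fintype.card 𝒳) * PY y
            = (1 - α) * ((∑ y', P (x, y')) * ∑ x', P (x', y))
              + α * (PY y / Fintype.card 𝒳) := by
          rw [hPmarg]; ring
        rw [hden]
        exact mul_logb_div_mix_le (sub_pos.2 hα.2) (hP0 _)
          (mul_nonneg (Finset.sum_nonneg fun _ _ => hP0 _) (Finset.sum_nonneg fun _ _ => hP0 _))
          (eq_zero_of_marginals_mul_eq_zero hP0) (mul_pos hα.1 (div_pos (hPY y) hN))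
    _ = (1 - α) * mutualInfo P := by simp only [mutualInfo, Finset.mul_sum]

theorem sum_mixUniform_mul_le [Nonempty 𝒳] (hα : α ∈ Set.Ioo (0 : ℝ) 1) (hP0 : ∀ p, 0 ≤ P p)
    (hPY0 : ∀ y, 0 ≤ PY y) (hPY1 : ∑ y, PY y = 1) {dmax : ℝ} {d : 𝒳 × 𝒴 → ℝ}
    (hd : ∀ p, d p ∈ Set.Icc 0 dmax) :
    ∑ p, mixUniform α P PY p * d p ≤ ∑ p, P p * d p + α * dmax := by
  have hN : (0 : ℝ) < Fintype.card 𝒳 := Nat.cast_pos.2 Fintype.card_pos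
  have hP_d : 0 ≤ ∑ p, P p * d p := Finset.sum_nonneg fun p _ => mul_nonneg (hP0 p) (hd p).1
  have hU_d : ∑ p : 𝒳 × 𝒴, PY p.2 / Fintype.card 𝒳 * d p ≤ dmax :=
    calc ∑ p : 𝒳 × 𝒴, PY p.2 / Fintype.card 𝒳 * d p
        ≤ ∑ p : 𝒳 × 𝒴, PY p.2 / Fintype.card 𝒳 * dmax :=
          Finset.sum_le_sum fun p _ =>
            mul_le_mul_of_nonneg_left (hd p).2 (div_nonneg (hPY0 p.2) hN.le)
      _ = dmax := by
          rw [← Finset.sum_mul, Fintype.sum_prod_type_right]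
          simp only [Finset.sum_const, Finset.card_univ, nsmul_eq_mul,
            mul_div_cancel₀ _ hN.ne', hPY1, one_mul]
  have hsplit : ∑ p, mixUniform α P PY p * d p
      = (1 - α) * ∑ p, P p * d p + α * ∑ p, PY p.2 / Fintype.card 𝒳 * d p := by
    simp only [mixUniform, add_mul, Finset.sum_add_distrib, Finset.mul_sum, mul_assoc]
  rw [hsplit]
  nlinarith [hα.1, hα.2]

end MixUniform

/-- Approximation step removing the strict positivity constraint: any joint pmf `PXY` on
`𝒳 × 𝒴` with `𝒴`-marginal `PY` can be approximated by a strictly positive joint pmf `Q` with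
the same `𝒴`-marginal, whose mutual information exceeds that of `PXY` by at most
`α · log₂ |𝒳|` and whose expected distortion exceeds that of `PXY` by at most `α · dmax`. -/
theorem stmt_16 {𝒳 𝒴 : Type*} [Fintype 𝒳] [Fintype 𝒴]
    (PY : 𝒴 → ℝ) (hPYpos : ∀ y, 0 < PY y) (hPY1 : ∑ y, PY y = 1)
    (dmax : ℝ) (d : 𝒳 × 𝒴 → ℝ) (hd : ∀ p, d p ∈ Set.Icc 0 dmax)
    (PXY : 𝒳 × 𝒴 → ℝ) (hP0 : ∀ p, 0 ≤ PXY p) (hP1 : ∑ p : 𝒳 × 𝒴, PXY p = 1)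
    (hPmarg : ∀ y, ∑ x, PXY (x, y) = PY y)
    (α : ℝ) (hα : α ∈ Set.Ioo (0 : ℝ) 1) :
    ∃ Q : 𝒳 × 𝒴 → ℝ,
      (∀ p, 0 < Q p) ∧ (∑ p : 𝒳 × 𝒴, Q p = 1) ∧ (∀ y, ∑ x, Q (x, y) = PY y) ∧
      ((∑ x, ∑ y, Q (x, y) *
          Real.logb 2 (Q (x, y) / ((∑ y', Q (x, y')) * (∑ x', Q (x', y)))))
        ≤ (∑ x, ∑ y, PXY (x, y) *
            Real.logb 2 (PXY (x, y) / ((∑ y', PXY (x, y')) * (∑ x', PXY (x', y)))))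
          + α * Real.logb 2 (Fintype.card 𝒳)) ∧
      (∑ p : 𝒳 × 𝒴, Q p * d p) ≤ (∑ p : 𝒳 × 𝒴, PXY p * d p) + α * dmax := by
  have : Nonempty 𝒳 := by
    by_contra h
    simp [not_nonempty_iff.1 h] at hP1
  have hQmarg := marginal_snd_mixUniform (α := α) hPmarg
  refine ⟨mixUniform α PXY PY, mixUniform_pos hα hP0 hPYpos, ?_, hQmarg, ?_,
    sum_mixUniform_mul_le hα hP0 (fun y => (hPYpos y).le) hPY1 hd⟩
  · rw [Fintype.sum_prod_type_right]
    simp only [hQmarg, hPY1]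
  · have hI : 0 ≤ mutualInfo PXY := mutualInfo_nonneg hP0 hP1
    have hlogN : 0 ≤ logb 2 (Fintype.card 𝒳) :=
      logb_nonneg one_lt_two (Nat.one_le_cast.2 Fintype.card_pos)
    change mutualInfo (mixUniform α PXY PY) ≤ mutualInfo PXY + α * logb 2 (Fintype.card 𝒳)
    nlinarith [mutualInfo_mixUniform_le hα hP0 hPYpos hPY1 hPmarg, hα.1]
end
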